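/- arXiv:1710.09976 — 5 statements merged into one kernel-verified Lean document; each statement's English description precedes it below -/
import Mathlib

section
/- Let 1 < γ < 2, τ > 0, N ≥ 1 an integer, T = Nτ, and define a_k^{(γ)} = (k+1)^{2−γ} − k^{2−γ} for integers k ≥ 0. Then for every vector (S_1, …, S_N) ∈ ℝ^N and every real constant P, (τ^{1−γ}/Γ(3−γ)) · Σ_{n=1}^{N} [a_0^{(γ)} S_n − Σ_{k=1}^{n−1} (a_{n−k−1}^{(γ)} − a_{n−k}^{(γ)}) S_k − a_{n−1}^{(γ)} P] · S_n ≥ (T^{1−γ}/(2Γ(2−γ))) · Σ_{n=1}^{N} S_n² − (T^{2−γ}/(2τΓ(3−γ))) · P², where Γ is the Gamma function. -/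
/-!
Write `u` for `S` with `u₀ = P`. The bracket is then the discrete convolution
`D_n u = ∑_{i<n} a_{n-1-i} (u_{i+1} - u_i)`. Since `a` is nonnegative and nonincreasing
(concavity of `x ↦ x^{2-γ}`), summation by parts against the squares `(u_n - u_i)²` gives
`2 (D_n u) u_n ≥ D_n (u²)`. Summing over `n`, the convolution telescopes because the partial
sums of `a` are `m^{2-γ}`, leaving `∑_n a_{N-n} S_n² - N^{2-γ} P²`, and
`a_k ≥ (2-γ)(k+1)^{1-γ} ≥ (2-γ) N^{1-γ}` for `k < N`. The constants then come from
`T = Nτ` and `Γ(3-γ) = (2-γ) Γ(2-γ)`.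
-/

open Finset

theorem sum_Icc_one_eq_sum_range {M : Type*} [AddCommMonoid M] (f : ℕ → M) (m : ℕ) :
    ∑ k ∈ Icc 1 m, f k = ∑ i ∈ range m, f (i + 1) := by
  induction m with
  | zero => simp
  | succ m ih => rw [sum_Icc_succ_top (by omega), ih, sum_range_succ]

theorem sum_mul_sub_succ_add_nonneg {b c : ℕ → ℝ} (hb : 0 ≤ b 0) (hmono : Monotone b)
    (hc : ∀ i, 0 ≤ c i) (n : ℕ) :
    0 ≤ ∑ i ∈ range n, b i * (c i - c (i + 1)) + b n * c n := by
  induction n with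
  | zero => simpa using mul_nonneg hb (hc 0)
  | succ n ih =>
    rw [sum_range_succ]
    nlinarith [mul_nonneg (sub_nonneg.mpr (hmono n.le_succ)) (hc (n + 1))]

section RpowIncrements

variable {p : ℝ}

theorem Real.rpow_le_rpow_add_mul_sub (hp0 : 0 ≤ p) (hp1 : p ≤ 1) {x y : ℝ} (hx : 0 < x)
    (hy : 0 ≤ y) : y ^ p ≤ x ^ p + p * x ^ (p - 1) * (y - x) := by
  have amgm : y ^ p * x ^ (1 - p) ≤ p * y + (1 - p) * x :=
    Real.geom_mean_le_arith_mean2_weighted hp0 (by linarith) hy hx.le (by ring)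
  have hxp : x * x ^ (p - 1) = x ^ p := by
    rw [Real.rpow_sub_one hx.ne']; field_simp
  have hy' : y ^ p = y ^ p * x ^ (1 - p) * x ^ (p - 1) := by
    rw [mul_assoc, ← Real.rpow_add hx]; simp
  rw [hy', ← hxp]
  nlinarith [mul_le_mul_of_nonneg_right amgm (Real.rpow_nonneg hx.le (p - 1))]

theorem mul_rpow_le_rpow_add_one_sub_rpow (hp0 : 0 ≤ p) (hp1 : p ≤ 1) {x : ℝ} (hx : 0 ≤ x) :
    p * (x + 1) ^ (p - 1) ≤ (x + 1) ^ p - x ^ p := by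
  have tangent := Real.rpow_le_rpow_add_mul_sub hp0 hp1 (by linarith : 0 < x + 1) hx
  rw [show x - (x + 1) = -1 by ring] at tangent
  linarith

theorem rpow_add_one_sub_rpow_le_mul_rpow (hp0 : 0 ≤ p) (hp1 : p ≤ 1) {x : ℝ} (hx : 0 < x) :
    (x + 1) ^ p - x ^ p ≤ p * x ^ (p - 1) := by
  have tangent := Real.rpow_le_rpow_add_mul_sub hp0 hp1 hx (by linarith : 0 ≤ x + 1)
  rw [show x + 1 - x = 1 by ring] at tangent
  linarith

end RpowIncrements

/-- The coefficients `a_k^{(γ)}` of the L2 scheme, with `p = 2 - γ`. -/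
noncomputable def l2Coeff (p : ℝ) (k : ℕ) : ℝ := ((k : ℝ) + 1) ^ p - (k : ℝ) ^ p

section L2Coeff

variable {p : ℝ}

theorem mul_rpow_le_l2Coeff (hp0 : 0 ≤ p) (hp1 : p ≤ 1) (k : ℕ) :
    p * ((k : ℝ) + 1) ^ (p - 1) ≤ l2Coeff p k :=
  mul_rpow_le_rpow_add_one_sub_rpow hp0 hp1 k.cast_nonneg

theorem l2Coeff_nonneg (hp0 : 0 ≤ p) (hp1 : p ≤ 1) (k : ℕ) : 0 ≤ l2Coeff p k :=
  (mul_nonneg hp0 (by positivity)).trans (mul_rpow_le_l2Coeff hp0 hp1 k)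

theorem l2Coeff_antitone (hp0 : 0 ≤ p) (hp1 : p ≤ 1) : Antitone (l2Coeff p) := by
  refine antitone_nat_of_succ_le fun k => ?_
  have upper := rpow_add_one_sub_rpow_le_mul_rpow hp0 hp1 (by positivity : (0 : ℝ) < k + 1)
  rw [l2Coeff, Nat.cast_succ]
  exact upper.trans (mul_rpow_le_l2Coeff hp0 hp1 k)

theorem sum_range_l2Coeff (hp : p ≠ 0) (m : ℕ) : ∑ j ∈ range m, l2Coeff p j = (m : ℝ) ^ p := by
  simpa [l2Coeff, Real.zero_rpow hp] using sum_range_sub (fun j : ℕ => (j : ℝ) ^ p) m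

end L2Coeff

def convDiff (a v : ℕ → ℝ) (n : ℕ) : ℝ :=
  ∑ i ∈ range n, a (n - 1 - i) * (v (i + 1) - v i)

theorem convDiff_eq (a v : ℕ → ℝ) {n : ℕ} (hn : 1 ≤ n) :
    convDiff a v n = a 0 * v n - ∑ k ∈ Icc 1 (n - 1), (a (n - k - 1) - a (n - k)) * v k
      - a (n - 1) * v 0 := by
  obtain ⟨m, rfl⟩ := Nat.exists_eq_add_of_le' hn
  have shift : ∀ i ∈ range m, (a (m + 1 - (i + 1) - 1) - a (m + 1 - (i + 1))) * v (i + 1)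
      = a (m - (i + 1)) * v (i + 1) - a (m - i) * v (i + 1) := fun i _ => by
    rw [show m + 1 - (i + 1) - 1 = m - (i + 1) by omega, show m + 1 - (i + 1) = m - i by omega,
      sub_mul]
  simp only [convDiff, Nat.add_sub_cancel, sum_Icc_one_eq_sum_range, sum_congr rfl shift,
    mul_sub, sum_sub_distrib]
  rw [sum_range_succ, sum_range_succ' (fun i => a (m - i) * v i)]
  simp only [Nat.sub_self, Nat.sub_zero]
  ring

theorem convDiff_update_zero_eq (a v : ℕ → ℝ) (P : ℝ) {n : ℕ} (hn : 1 ≤ n) :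
    convDiff a (Function.update v 0 P) n
      = a 0 * v n - ∑ k ∈ Icc 1 (n - 1), (a (n - k - 1) - a (n - k)) * v k - a (n - 1) * P := by
  have hv : ∀ k, 1 ≤ k → Function.update v 0 P k = v k := fun k hk =>
    Function.update_of_ne (by omega) P v
  rw [convDiff_eq a _ hn, hv n hn, Function.update_self]
  congr 2
  exact sum_congr rfl fun k hk => by rw [hv k (mem_Icc.mp hk).1]

theorem convDiff_sq_le_two_mul {a : ℕ → ℝ} (ha : Antitone a) (ha0 : ∀ k, 0 ≤ a k)
    (v : ℕ → ℝ) (n : ℕ) :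
    convDiff a (fun k => v k ^ 2) n ≤ 2 * convDiff a v n * v n := by
  have abel := sum_mul_sub_succ_add_nonneg (b := fun i => a (n - 1 - i))
    (c := fun i => (v n - v i) ^ 2) (ha0 _) (fun i j hij => ha (by omega))
    (fun i => sq_nonneg _) n
  have expand : ∑ i ∈ range n, a (n - 1 - i) * ((v n - v i) ^ 2 - (v n - v (i + 1)) ^ 2)
      = 2 * convDiff a v n * v n - convDiff a (fun k => v k ^ 2) n := by
    simp only [convDiff, mul_assoc, mul_sum, sum_mul, ← sum_sub_distrib]
    exact sum_congr rfl fun i _ => by ring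
  simp only [sub_self, zero_pow two_ne_zero, mul_zero, add_zero] at abel
  linarith

theorem sum_convDiff (a v : ℕ → ℝ) (N : ℕ) :
    ∑ n ∈ Icc 1 N, convDiff a v n
      = ∑ i ∈ range N, a (N - 1 - i) * v (i + 1) - (∑ j ∈ range N, a j) * v 0 := by
  induction N with
  | zero => simp
  | succ N ih =>
    have shift : ∀ i ∈ range N, a (N - (i + 1)) * v (i + 1) = a (N - 1 - i) * v (i + 1) :=
      fun i _ => by rw [show N - (i + 1) = N - 1 - i by omega]
    rw [sum_Icc_succ_top (by omega), ih, convDiff]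
    simp only [Nat.add_sub_cancel, mul_sub, sum_sub_distrib]
    rw [sum_range_succ' (fun i => a (N - i) * v i), sum_congr rfl shift, sum_range_succ,
      sum_range_succ]
    simp only [Nat.sub_self, Nat.sub_zero]
    ring

theorem sum_convDiff_mul_self_ge {a : ℕ → ℝ} (ha : Antitone a) (ha0 : ∀ k, 0 ≤ a k)
    (v : ℕ → ℝ) (N : ℕ) :
    ∑ i ∈ range N, a (N - 1 - i) * v (i + 1) ^ 2 - (∑ j ∈ range N, a j) * v 0 ^ 2
      ≤ 2 * ∑ n ∈ Icc 1 N, convDiff a v n * v n := by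
  rw [← sum_convDiff a (fun k => v k ^ 2), mul_sum]
  exact sum_le_sum fun n _ => by rw [← mul_assoc]; exact convDiff_sq_le_two_mul ha ha0 v n

theorem sum_convDiff_l2Coeff_mul_self_ge {p : ℝ} (hp0 : 0 < p) (hp1 : p < 1)
    (v : ℕ → ℝ) (N : ℕ) :
    p * (N : ℝ) ^ (p - 1) * ∑ n ∈ Icc 1 N, v n ^ 2 - (N : ℝ) ^ p * v 0 ^ 2
      ≤ 2 * ∑ n ∈ Icc 1 N, convDiff (l2Coeff p) v n * v n := by
  have weight : ∀ i ∈ range N,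
      p * (N : ℝ) ^ (p - 1) * v (i + 1) ^ 2 ≤ l2Coeff p (N - 1 - i) * v (i + 1) ^ 2 := by
    intro i hi
    have hiN : N - 1 - i + 1 ≤ N := by have := mem_range.mp hi; omega
    gcongr
    refine le_trans (mul_le_mul_of_nonneg_left ?_ hp0.le) (mul_rpow_le_l2Coeff hp0.le hp1.le _)
    exact Real.rpow_le_rpow_of_nonpos (by positivity) (by exact_mod_cast hiN) (by linarith)
  have abel := sum_convDiff_mul_self_ge (l2Coeff_antitone hp0.le hp1.le)
    (l2Coeff_nonneg hp0.le hp1.le) v N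
  rw [sum_range_l2Coeff hp0.ne'] at abel
  rw [sum_Icc_one_eq_sum_range, mul_sum]
  linarith [sum_le_sum weight]

theorem sum_l2Coeff_scheme_mul_self_ge {p : ℝ} (hp0 : 0 < p) (hp1 : p < 1)
    (S : ℕ → ℝ) (P : ℝ) (N : ℕ) :
    p * (N : ℝ) ^ (p - 1) * ∑ n ∈ Icc 1 N, S n ^ 2 - (N : ℝ) ^ p * P ^ 2
      ≤ 2 * ∑ n ∈ Icc 1 N, (l2Coeff p 0 * S n
          - ∑ k ∈ Icc 1 (n - 1), (l2Coeff p (n - k - 1) - l2Coeff p (n - k)) * S k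
          - l2Coeff p (n - 1) * P) * S n := by
  set u := Function.update S 0 P
  have hu0 : u 0 = P := Function.update_self 0 P S
  have hu : ∀ n ∈ Icc 1 N, u n = S n := fun n hn =>
    Function.update_of_ne (by have := (mem_Icc.mp hn).1; omega) P S
  have bracket : ∀ n ∈ Icc 1 N,
      (l2Coeff p 0 * S n - ∑ k ∈ Icc 1 (n - 1), (l2Coeff p (n - k - 1) - l2Coeff p (n - k)) * S k
        - l2Coeff p (n - 1) * P) * S n = convDiff (l2Coeff p) u n * u n := fun n hn => by
    rw [convDiff_update_zero_eq _ S P (mem_Icc.mp hn).1, hu n hn]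
  have hsq : ∑ n ∈ Icc 1 N, u n ^ 2 = ∑ n ∈ Icc 1 N, S n ^ 2 :=
    sum_congr rfl fun n hn => by rw [hu n hn]
  rw [sum_congr rfl bracket, ← hsq, ← hu0]
  exact sum_convDiff_l2Coeff_mul_self_ge hp0 hp1 u N

theorem L2_coefficients_coercivity_general
    (γ τ : ℝ) (hγ1 : 1 < γ) (hγ2 : γ < 2) (hτ : 0 < τ)
    (N : ℕ) (T : ℝ) (hT : T = N * τ)
    (a : ℕ → ℝ) (ha : ∀ k, a k = ((k : ℝ) + 1) ^ (2 - γ) - (k : ℝ) ^ (2 - γ))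
    (S : ℕ → ℝ) (P : ℝ) :
    τ ^ (1 - γ) / Real.Gamma (3 - γ) *
        ∑ n ∈ Finset.Icc 1 N,
          (a 0 * S n - (∑ k ∈ Finset.Icc 1 (n - 1), (a (n - k - 1) - a (n - k)) * S k)
            - a (n - 1) * P) * S n
      ≥ T ^ (1 - γ) / (2 * Real.Gamma (2 - γ)) * ∑ n ∈ Finset.Icc 1 N, (S n) ^ 2
        - T ^ (2 - γ) / (2 * τ * Real.Gamma (3 - γ)) * P ^ 2 := by
  obtain rfl : a = l2Coeff (2 - γ) := funext ha
  have hp : 0 < 2 - γ := by linarith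
  have coercive := sum_l2Coeff_scheme_mul_self_ge hp (by linarith) S P N
  rw [show 2 - γ - 1 = 1 - γ by ring] at coercive
  have hΓ2 : 0 < Real.Gamma (2 - γ) := Real.Gamma_pos_of_pos hp
  have hΓ3 : Real.Gamma (3 - γ) = (2 - γ) * Real.Gamma (2 - γ) := by
    rw [← Real.Gamma_add_one hp.ne']; ring_nf
  have hT1 : T ^ (1 - γ) = (N : ℝ) ^ (1 - γ) * τ ^ (1 - γ) := by
    rw [hT, Real.mul_rpow N.cast_nonneg hτ.le]
  have hT2 : T ^ (2 - γ) = (N : ℝ) ^ (2 - γ) * (τ ^ (1 - γ) * τ) := by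
    rw [hT, Real.mul_rpow N.cast_nonneg hτ.le, ← Real.rpow_add_one hτ.ne']; ring_nf
  have rhs : T ^ (1 - γ) / (2 * Real.Gamma (2 - γ)) * ∑ n ∈ Icc 1 N, S n ^ 2
        - T ^ (2 - γ) / (2 * τ * Real.Gamma (3 - γ)) * P ^ 2
      = τ ^ (1 - γ) / Real.Gamma (3 - γ) * (((2 - γ) * (N : ℝ) ^ (1 - γ) *
          ∑ n ∈ Icc 1 N, S n ^ 2 - (N : ℝ) ^ (2 - γ) * P ^ 2) / 2) := by
    rw [hT1, hT2, hΓ3]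
    field_simp
  rw [ge_iff_le, rhs, hΓ3]
  gcongr
  linarith

/-- Lemma 2.1: coercivity of the L2 discretization coefficients of the Caputo
derivative of order `1 < γ < 2`. -/
theorem L2_coefficients_coercivity
    (γ τ : ℝ) (hγ1 : 1 < γ) (hγ2 : γ < 2) (hτ : 0 < τ)
    (N : ℕ) (hN : 1 ≤ N) (T : ℝ) (hT : T = N * τ)
    (a : ℕ → ℝ) (ha : ∀ k, a k = ((k : ℝ) + 1) ^ (2 - γ) - (k : ℝ) ^ (2 - γ))
    (S : ℕ → ℝ) (P : ℝ) :
    τ ^ (1 - γ) / Real.Gamma (3 - γ) *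
        ∑ n ∈ Finset.Icc 1 N,
          (a 0 * S n - (∑ k ∈ Finset.Icc 1 (n - 1), (a (n - k - 1) - a (n - k)) * S k)
            - a (n - 1) * P) * S n
      ≥ T ^ (1 - γ) / (2 * Real.Gamma (2 - γ)) * ∑ n ∈ Finset.Icc 1 N, (S n) ^ 2
        - T ^ (2 - γ) / (2 * τ * Real.Gamma (3 - γ)) * P ^ 2 :=
  L2_coefficients_coercivity_general γ τ hγ1 hγ2 hτ N T hT a ha S P
end

section
/- Let (g_0, g_1, g_2, …) be a sequence of real numbers such that g_n ≥ 0 for all n ≥ 0, g_n − g_{n−1} ≤ 0 for all n ≥ 1, and g_{n+1} − 2g_n + g_{n−1} ≥ 0 for all n ≥ 1. Then for every positive integer M and every vector (V_1, …, V_M) ∈ ℝ^M, Σ_{n=1}^{M} (Σ_{p=0}^{n−1} g_p · V_{n−p}) · V_n ≥ 0. -/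
/-!
The form is linear in `g` and only sees `g 0, …, g (M - 1)`. Two summations by parts write such a
`g`, when it is nonnegative, nonincreasing and convex, as a nonnegative combination of the constant
sequence `1` and the tents `p ↦ (k - p)₊`, so it suffices to treat these. Symmetrizing, the form of
a kernel `K` is half of `∑ m n, K |m - n| V m V n + K 0 ∑ n, V n ^ 2`. For `K = 1` the double sum is
`(∑ n, V n) ^ 2`; for the tent `(k - |m - n|)₊ = #([m, m + k) ∩ [n, n + k))` it is a Gram matrix of
indicator vectors, hence positive semidefinite.
-/

open Finset

theorem sum_range_sum_range_succ_eq_sum_tsub_mul (A : ℕ → ℝ) (k : ℕ) :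
    ∑ j ∈ range k, ∑ p ∈ range (j + 1), A p = ∑ p ∈ range k, ((k - p : ℕ) : ℝ) * A p := by
  induction k with
  | zero => simp
  | succ k ih =>
    rw [sum_range_succ, ih, sum_range_succ _ k, sum_range_succ _ k, ← add_assoc,
      ← sum_add_distrib]
    congr 1
    · refine sum_congr rfl fun p hp ↦ ?_
      rw [Nat.succ_sub (mem_range.1 hp).le]
      push_cast
      ring
    · simp

theorem sum_mul_nonneg_of_antitone_of_convex {g A : ℕ → ℝ} {N : ℕ} (hg : 0 ≤ g (N - 1))
    (hanti : Antitone g) (hconv : Monotone fun k ↦ g (k + 1) - g k)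
    (hA : 0 ≤ ∑ p ∈ range N, A p)
    (htent : ∀ k ≤ N, 0 ≤ ∑ p ∈ range N, ((k - p : ℕ) : ℝ) * A p) :
    0 ≤ ∑ p ∈ range N, g p * A p := by
  replace htent : ∀ k ≤ N, 0 ≤ ∑ p ∈ range k, ((k - p : ℕ) : ℝ) * A p := fun k hk ↦ by
    rw [sum_subset (range_subset_range.2 hk) fun p _ hp ↦ by
      rw [mem_range, not_lt, ← Nat.sub_eq_zero_iff_le] at hp; simp [hp]]
    exact htent k hk
  have h1 := sum_range_by_parts g A N
  have h2 := sum_range_by_parts (fun k ↦ g (k + 1) - g k) (fun k ↦ ∑ p ∈ range (k + 1), A p)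
    (N - 1)
  simp only [smul_eq_mul, sum_range_sum_range_succ_eq_sum_tsub_mul] at h1 h2
  rw [h1, h2]
  have hlast := mul_nonpos_of_nonpos_of_nonneg (sub_nonpos.2 (hanti (Nat.le_succ (N - 1 - 1))))
    (htent (N - 1) (Nat.sub_le N 1))
  have hsecond : 0 ≤ ∑ x ∈ range (N - 1 - 1),
      (g (x + 1 + 1) - g (x + 1) - (g (x + 1) - g x)) *
        ∑ p ∈ range (x + 1), ((x + 1 - p : ℕ) : ℝ) * A p :=
    sum_nonneg fun x hx ↦ mul_nonneg (sub_nonneg.2 (hconv (Nat.le_succ x)))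
      (htent (x + 1) (by rw [mem_range] at hx; omega))
  linarith [mul_nonneg hg hA]

theorem sum_Icc_sum_Icc_le_add_self {R : Type*} [AddCommMonoid R] {F : ℕ → ℕ → R}
    (hF : ∀ m n, F m n = F n m) (M : ℕ) :
    (∑ n ∈ Icc 1 M, ∑ m ∈ Icc 1 n, F m n) + ∑ n ∈ Icc 1 M, ∑ m ∈ Icc 1 n, F m n =
      (∑ m ∈ Icc 1 M, ∑ n ∈ Icc 1 M, F m n) + ∑ n ∈ Icc 1 M, F n n := by
  induction M with
  | zero => simp
  | succ M ih =>
    simp only [sum_Icc_succ_top (Nat.le_add_left 1 M), sum_add_distrib]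
    rw [sum_congr rfl fun n _ ↦ hF (M + 1) n, add_add_add_comm, ih]
    abel

theorem sum_sum_card_inter_mul_nonneg {ι α : Type*} [DecidableEq α] (s : Finset ι)
    (I : ι → Finset α) (x : ι → ℝ) :
    0 ≤ ∑ m ∈ s, ∑ n ∈ s, (#(I m ∩ I n) : ℝ) * (x m * x n) := by
  calc 0 ≤ ∑ j ∈ s.biUnion I, (∑ m ∈ s, if j ∈ I m then x m else 0) ^ 2 :=
        sum_nonneg fun _ _ ↦ sq_nonneg _
    _ = ∑ m ∈ s, ∑ n ∈ s, ∑ j ∈ s.biUnion I,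
          (if j ∈ I m then x m else 0) * (if j ∈ I n then x n else 0) := by
      simp_rw [sq, sum_mul_sum]
      rw [sum_comm]
      exact sum_congr rfl fun _ _ ↦ sum_comm
    _ = _ := sum_congr rfl fun m hm ↦ sum_congr rfl fun n _ ↦ by
      simp_rw [ite_zero_mul_ite_zero, ← mem_inter, sum_ite_mem,
        inter_eq_right.2 (inter_subset_left.trans (subset_biUnion_of_mem I hm)), sum_const,
        nsmul_eq_mul]

theorem card_Ico_inter_Ico_add (L m n : ℕ) :
    #(Ico m (m + L) ∩ Ico n (n + L)) = L - Nat.dist m n := by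
  rw [Ico_inter_Ico, Nat.card_Ico, Nat.dist]
  omega

noncomputable def lowerToeplitzForm (g : ℕ → ℝ) (M : ℕ) (V : ℕ → ℝ) : ℝ :=
  ∑ n ∈ Icc 1 M, (∑ p ∈ range n, g p * V (n - p)) * V n

theorem lowerToeplitzForm_eq_sum_range (g : ℕ → ℝ) (M : ℕ) (V : ℕ → ℝ) :
    lowerToeplitzForm g M V = ∑ p ∈ range M, g p * ∑ n ∈ Ioc p M, V (n - p) * V n := by
  simp_rw [lowerToeplitzForm, sum_mul, mul_sum, mul_assoc]
  exact sum_comm' fun n p ↦ by simp only [mem_Icc, mem_range, mem_Ioc]; omega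

theorem lowerToeplitzForm_eq_sum_Icc_sum_Icc (g : ℕ → ℝ) (M : ℕ) (V : ℕ → ℝ) :
    lowerToeplitzForm g M V = ∑ n ∈ Icc 1 M, ∑ m ∈ Icc 1 n, g (n - m) * (V m * V n) := by
  refine sum_congr rfl fun n _ ↦ ?_
  rw [sum_mul]
  refine sum_nbij' (n - ·) (n - ·) ?_ ?_ ?_ ?_ fun p hp ↦ by
    rw [Nat.sub_sub_self (mem_range.1 hp).le, mul_assoc]
  all_goals intro p hp; simp only [mem_Icc, mem_range] at hp ⊢; omega

theorem lowerToeplitzForm_nonneg_of_kernel {K : ℕ → ℝ} {M : ℕ} {V : ℕ → ℝ} (h0 : 0 ≤ K 0)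
    (h : 0 ≤ ∑ m ∈ Icc 1 M, ∑ n ∈ Icc 1 M, K (Nat.dist m n) * (V m * V n)) :
    0 ≤ lowerToeplitzForm K M V := by
  have hsym := sum_Icc_sum_Icc_le_add_self (F := fun m n ↦ K (Nat.dist m n) * (V m * V n))
    (fun m n ↦ by rw [Nat.dist_comm, mul_comm (V m)]) M
  have htri : lowerToeplitzForm K M V =
      ∑ n ∈ Icc 1 M, ∑ m ∈ Icc 1 n, K (Nat.dist m n) * (V m * V n) := by
    rw [lowerToeplitzForm_eq_sum_Icc_sum_Icc]
    refine sum_congr rfl fun n _ ↦ sum_congr rfl fun m hm ↦ ?_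
    rw [Nat.dist_eq_sub_of_le (mem_Icc.1 hm).2]
  have hdiag : 0 ≤ ∑ n ∈ Icc 1 M, K (Nat.dist n n) * (V n * V n) :=
    sum_nonneg fun n _ ↦ by rw [Nat.dist_self]; exact mul_nonneg h0 (mul_self_nonneg _)
  linarith

theorem lowerToeplitzForm_one_nonneg (M : ℕ) (V : ℕ → ℝ) : 0 ≤ lowerToeplitzForm 1 M V :=
  lowerToeplitzForm_nonneg_of_kernel zero_le_one <| by
    simp only [Pi.one_apply, one_mul, ← sum_mul_sum]
    exact mul_self_nonneg _

theorem lowerToeplitzForm_tsub_nonneg (L M : ℕ) (V : ℕ → ℝ) :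
    0 ≤ lowerToeplitzForm (fun p ↦ ((L - p : ℕ) : ℝ)) M V :=
  lowerToeplitzForm_nonneg_of_kernel (Nat.cast_nonneg _) <| by
    simpa only [card_Ico_inter_Ico_add] using
      sum_sum_card_inter_mul_nonneg (Icc 1 M) (fun m ↦ Ico m (m + L)) V

theorem convolution_quadratic_form_nonneg_general
    (g : ℕ → ℝ) (hg0 : ∀ n, 0 ≤ g n)
    (hg1 : ∀ n : ℕ, 1 ≤ n → g n - g (n - 1) ≤ 0)
    (hg2 : ∀ n : ℕ, 1 ≤ n → g (n + 1) - 2 * g n + g (n - 1) ≥ 0)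
    (M : ℕ) (V : ℕ → ℝ) :
    ∑ n ∈ Finset.Icc 1 M, (∑ p ∈ Finset.range n, g p * V (n - p)) * V n ≥ 0 := by
  have hanti : Antitone g := antitone_nat_of_succ_le fun n ↦ by
    simpa using hg1 (n + 1) n.succ_pos
  have hconv : Monotone fun k ↦ g (k + 1) - g k := monotone_nat_of_le_succ fun n ↦ by
    have := hg2 (n + 1) n.succ_pos
    simp only [Nat.add_sub_cancel] at this
    linarith
  show 0 ≤ lowerToeplitzForm g M V
  rw [lowerToeplitzForm_eq_sum_range]
  refine sum_mul_nonneg_of_antitone_of_convex (hg0 _) hanti hconv ?_ fun k _ ↦ ?_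
  · simpa only [lowerToeplitzForm_eq_sum_range, Pi.one_apply, one_mul] using
      lowerToeplitzForm_one_nonneg M V
  · simpa only [lowerToeplitzForm_eq_sum_range] using lowerToeplitzForm_tsub_nonneg k M V

/-- Lemma 2.5 (López-Marcos): for a nonnegative, nonincreasing, convex sequence
`g`, the associated quadratic form of the lower-triangular convolution is
nonnegative. -/
theorem convolution_quadratic_form_nonneg
    (g : ℕ → ℝ) (hg0 : ∀ n, 0 ≤ g n)
    (hg1 : ∀ n : ℕ, 1 ≤ n → g n - g (n - 1) ≤ 0)
    (hg2 : ∀ n : ℕ, 1 ≤ n → g (n + 1) - 2 * g n + g (n - 1) ≥ 0)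
    (M : ℕ) (hM : 1 ≤ M) (V : ℕ → ℝ) :
    ∑ n ∈ Finset.Icc 1 M, (∑ p ∈ Finset.range n, g p * V (n - p)) * V n ≥ 0 :=
  convolution_quadratic_form_nonneg_general g hg0 hg1 hg2 M V
end

section
/- Let 0 < β < 1 and define d_k^{(β)} = (k+1)^{1−β} − k^{1−β} for integers k ≥ 0. Then for every positive integer N and every vector (v^1, v^2, …, v^N) ∈ ℝ^N, Σ_{n=1}^{N} Σ_{k=1}^{n} d_{n−k}^{(β)} · v^k · v^n ≥ 0. -/
/-!
The form is linear in the kernel `c` in `∑_{1 ≤ k ≤ n ≤ N} c (n - k) v_k v_n`. For `c ≡ 1` it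
is `((∑ v)² + ∑ v²) / 2 ≥ 0`. For the tent `c j = (m + 1 - j)₊` it is a sum of such forms, one
per window `[t - m, t]`, because `(m + 1 - (n - k))₊` counts the windows containing both `k`
and `n`. A nonnegative, nonincreasing, convex kernel agrees on `0, …, N - 1` with a nonnegative
combination of `1` and tents, the weights being `d N`, `d (N - 1) - d N` and the second
differences of `d`. Finally `d k = g k` for `g x = (x + 1) ^ (1 - β) - x ^ (1 - β)`, which is
convex since `g'' ≥ 0`, and `d` is nonincreasing because `x ^ (1 - β)` is concave.
-/

open Finset

def toeplitzForm (N : ℕ) (v : ℕ → ℝ) : (ℕ → ℝ) →ₗ[ℝ] ℝ where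
  toFun c := ∑ n ∈ Icc 1 N, ∑ k ∈ Icc 1 n, c (n - k) * v k * v n
  map_add' c c' := by simp only [Pi.add_apply, add_mul, sum_add_distrib]
  map_smul' a c := by simp only [Pi.smul_apply, smul_eq_mul, RingHom.id_apply, mul_sum, mul_assoc]

lemma toeplitzForm_apply (N : ℕ) (v c : ℕ → ℝ) :
    toeplitzForm N v c = ∑ n ∈ Icc 1 N, ∑ k ∈ Icc 1 n, c (n - k) * v k * v n := rfl

lemma toeplitzForm_congr {N : ℕ} {v c c' : ℕ → ℝ} (h : ∀ j < N, c j = c' j) :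
    toeplitzForm N v c = toeplitzForm N v c' := by
  simp only [toeplitzForm_apply]
  refine sum_congr rfl fun n hn => sum_congr rfl fun k hk => ?_
  rw [mem_Icc] at hn hk
  rw [h _ (by omega)]

lemma two_mul_toeplitzForm_one (N : ℕ) (v : ℕ → ℝ) :
    2 * toeplitzForm N v 1 = (∑ i ∈ Icc 1 N, v i) ^ 2 + ∑ i ∈ Icc 1 N, v i ^ 2 := by
  induction N with
  | zero => simp [toeplitzForm_apply]
  | succ N ih =>
    have h1 : 1 ≤ N + 1 := by omega
    simp only [toeplitzForm_apply, Pi.one_apply, one_mul] at ih ⊢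
    rw [sum_Icc_succ_top h1, sum_Icc_succ_top h1, sum_Icc_succ_top h1,
      sum_Icc_succ_top h1 (f := fun i => v i ^ 2), ← sum_mul]
    linear_combination ih

lemma toeplitzForm_one_nonneg (N : ℕ) (v : ℕ → ℝ) : 0 ≤ toeplitzForm N v 1 := by
  nlinarith [two_mul_toeplitzForm_one N v, sq_nonneg (∑ i ∈ Icc 1 N, v i),
    sum_nonneg fun i (_ : i ∈ Icc 1 N) => sq_nonneg (v i)]

/-- The truncated subtraction makes this `(m + 1 - j)₊`. -/
def tent (m j : ℕ) : ℝ := ((m + 1 - j : ℕ) : ℝ)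

lemma toeplitzForm_tent_eq_sum (N m : ℕ) (v : ℕ → ℝ) :
    toeplitzForm N v (tent m) =
      ∑ t ∈ Icc 1 (N + m), toeplitzForm N ((Set.Icc (t - m) t).indicator v) 1 := by
  simp only [toeplitzForm_apply, Pi.one_apply, one_mul]
  rw [sum_comm]
  refine sum_congr rfl fun n hn => ?_
  rw [sum_comm]
  refine sum_congr rfl fun k hk => ?_
  rw [mem_Icc] at hn hk
  have hwin : ∀ t, (Set.Icc (t - m) t).indicator v k * (Set.Icc (t - m) t).indicator v n =
      if t ∈ Icc n (k + m) then v k * v n else 0 := by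
    intro t
    simp only [Set.indicator_apply, Set.mem_Icc, mem_Icc]
    split_ifs <;> first | (exfalso; omega) | simp
  simp only [mul_assoc, hwin, ← sum_filter]
  rw [sum_const, nsmul_eq_mul, tent]
  congr 2
  rw [filter_mem_eq_inter, inter_eq_right.mpr (Icc_subset_Icc (by omega) (by omega)),
    Nat.card_Icc]
  omega

lemma toeplitzForm_tent_nonneg (N m : ℕ) (v : ℕ → ℝ) : 0 ≤ toeplitzForm N v (tent m) := by
  rw [toeplitzForm_tent_eq_sum]
  exact sum_nonneg fun t _ => toeplitzForm_one_nonneg N _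

lemma eq_tent_expansion (d : ℕ → ℝ) {M j : ℕ} (hj : j ≤ M) :
    d j = d (M + 1) + (d M - d (M + 1)) * tent M j +
      ∑ l ∈ range M, (d l - 2 * d (l + 1) + d (l + 2)) * tent l j := by
  induction M with
  | zero => obtain rfl := Nat.le_zero.mp hj; simp [tent]
  | succ M ih =>
    obtain hj | rfl := Nat.le_succ_iff.mp hj
    · rw [ih hj, sum_range_succ]
      have : tent (M + 1) j = tent M j + 1 := by
        simp only [tent]; norm_cast; omega
      rw [this]
      ring
    · have hzero : ∀ l ∈ range (M + 1), tent l (M + 1) = 0 := fun l hl => by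
        simp only [tent, mem_range] at hl ⊢; norm_cast; omega
      rw [sum_eq_zero fun l hl => by rw [hzero l hl, mul_zero]]
      simp [tent]

theorem toeplitzForm_nonneg_of_convex {d : ℕ → ℝ} (hd₀ : 0 ≤ d) (hd_anti : Antitone d)
    (hd_conv : ∀ l, 2 * d (l + 1) ≤ d l + d (l + 2)) (N : ℕ) (v : ℕ → ℝ) :
    0 ≤ toeplitzForm N v d := by
  obtain _ | M := N
  · simp [toeplitzForm_apply]
  have hexp : ∀ j < M + 1, d j = (d (M + 1) • (1 : ℕ → ℝ) + (d M - d (M + 1)) • tent M +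
      ∑ l ∈ range M, (d l - 2 * d (l + 1) + d (l + 2)) • tent l) j := fun j hj => by
    simpa [Finset.sum_apply] using eq_tent_expansion d (Nat.lt_succ_iff.mp hj)
  rw [toeplitzForm_congr hexp, map_add, map_add, map_sum]
  refine add_nonneg (add_nonneg ?_ ?_) (sum_nonneg fun l _ => ?_) <;>
    simp only [map_smul, smul_eq_mul]
  · exact mul_nonneg (hd₀ _) (toeplitzForm_one_nonneg _ _)
  · exact mul_nonneg (sub_nonneg.mpr (hd_anti M.le_succ)) (toeplitzForm_tent_nonneg _ _ _)
  · exact mul_nonneg (by linarith [hd_conv l]) (toeplitzForm_tent_nonneg _ _ _)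

lemma ConvexOn.two_mul_le_add {s : Set ℝ} {f : ℝ → ℝ} (hf : ConvexOn ℝ s f) {x : ℝ}
    (hx : x ∈ s) (hx₂ : x + 2 ∈ s) : 2 * f (x + 1) ≤ f x + f (x + 2) := by
  have h := hf.2 hx hx₂ (by norm_num : (0 : ℝ) ≤ 1 / 2) (by norm_num : (0 : ℝ) ≤ 1 / 2)
    (by norm_num)
  rw [smul_eq_mul, smul_eq_mul, smul_eq_mul, smul_eq_mul,
    show 1 / 2 * x + 1 / 2 * (x + 2) = x + 1 by ring] at h
  linarith

lemma hasDerivAt_add_one_rpow_sub_rpow (p : ℝ) {x : ℝ} (hx : 0 < x) :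
    HasDerivAt (fun y : ℝ => (y + 1) ^ p - y ^ p) (p * ((x + 1) ^ (p - 1) - x ^ (p - 1))) x := by
  have h₁ := ((hasDerivAt_id' x).add_const 1).rpow_const (p := p)
    (Or.inl (by linarith : 0 < x + 1).ne')
  have h₂ := Real.hasDerivAt_rpow_const (p := p) (Or.inl hx.ne')
  exact (h₁.sub h₂).congr_deriv (by ring)

lemma convexOn_add_one_rpow_sub_rpow {p : ℝ} (hp₀ : 0 ≤ p) (hp₁ : p ≤ 1) :
    ConvexOn ℝ (Set.Ici 0) (fun x : ℝ => (x + 1) ^ p - x ^ p) := by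
  refine convexOn_of_hasDerivWithinAt2_nonneg (convex_Ici 0)
    (f' := fun x => p * ((x + 1) ^ (p - 1) - x ^ (p - 1)))
    (f'' := fun x => p * ((p - 1) * ((x + 1) ^ (p - 1 - 1) - x ^ (p - 1 - 1)))) ?_ ?_ ?_ ?_
  · exact ((continuous_add_const 1).continuousOn.rpow_const fun _ _ => Or.inr hp₀).sub
      (continuousOn_id.rpow_const fun _ _ => Or.inr hp₀)
  · simp only [interior_Ici]
    exact fun x hx => (hasDerivAt_add_one_rpow_sub_rpow p hx).hasDerivWithinAt
  · simp only [interior_Ici]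
    exact fun x hx => ((hasDerivAt_add_one_rpow_sub_rpow (p - 1) hx).const_mul p).hasDerivWithinAt
  · simp only [interior_Ici]
    intro x hx
    have hpow : (x + 1) ^ (p - 1 - 1) ≤ x ^ (p - 1 - 1) :=
      Real.rpow_le_rpow_of_nonpos hx (by linarith) (by linarith)
    exact mul_nonneg hp₀ (mul_nonneg_of_nonpos_of_nonpos (by linarith) (by linarith))

theorem L1_quadratic_form_nonneg_general
    (β : ℝ) (hβ0 : 0 < β) (hβ1 : β < 1)
    (d : ℕ → ℝ) (hd : ∀ k, d k = ((k : ℝ) + 1) ^ (1 - β) - (k : ℝ) ^ (1 - β))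
    (N : ℕ) (v : ℕ → ℝ) :
    ∑ n ∈ Finset.Icc 1 N, ∑ k ∈ Finset.Icc 1 n, d (n - k) * v k * v n ≥ 0 := by
  have hp₀ : 0 ≤ 1 - β := by linarith
  have hp₁ : 1 - β ≤ 1 := by linarith
  have hd₀ : 0 ≤ d := fun k => by
    rw [hd]
    exact sub_nonneg.mpr (Real.rpow_le_rpow k.cast_nonneg (by linarith) hp₀)
  have hd_anti : Antitone d := antitone_nat_of_succ_le fun l => by
    have h := (Real.concaveOn_rpow hp₀ hp₁).neg.two_mul_le_add
      (Set.mem_Ici.mpr l.cast_nonneg) (Set.mem_Ici.mpr (by positivity))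
    simp only [Pi.neg_apply] at h
    rw [hd, hd]; push_cast
    ring_nf at h ⊢
    linarith
  have hd_conv : ∀ l, 2 * d (l + 1) ≤ d l + d (l + 2) := fun l => by
    have h := (convexOn_add_one_rpow_sub_rpow hp₀ hp₁).two_mul_le_add
      (Set.mem_Ici.mpr l.cast_nonneg) (Set.mem_Ici.mpr (by positivity))
    rw [hd, hd, hd]; push_cast
    ring_nf at h ⊢
    linarith
  exact toeplitzForm_nonneg_of_convex hd₀ hd_anti hd_conv N v

/-- Lemma 2.6, inequality (16): nonnegativity of the quadratic form built from
the L1 coefficients `d_k^{(β)}`. -/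
theorem L1_quadratic_form_nonneg
    (β : ℝ) (hβ0 : 0 < β) (hβ1 : β < 1)
    (d : ℕ → ℝ) (hd : ∀ k, d k = ((k : ℝ) + 1) ^ (1 - β) - (k : ℝ) ^ (1 - β))
    (N : ℕ) (hN : 1 ≤ N) (v : ℕ → ℝ) :
    ∑ n ∈ Finset.Icc 1 N, ∑ k ∈ Finset.Icc 1 n, d (n - k) * v k * v n ≥ 0 :=
  L1_quadratic_form_nonneg_general β hβ0 hβ1 d hd N v
end

section
/- Let 0 < β < 1 and define d_k^{(β)} = (k+1)^{1−β} − k^{1−β} for integers k ≥ 0. Then for every positive integer N and every vector (v^1, v^2, …, v^N) ∈ ℝ^N, Σ_{n=1}^{N} Σ_{k=1}^{n} d_{n−k}^{(β)} · v^k · v^n + Σ_{n=1}^{N} Σ_{k=1}^{n−1} d_{n−1−k}^{(β)} · v^k · v^n ≥ 0. -/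
/-!
The sequence `d` is a nonnegative mixture of geometric sequences `m ↦ r ^ m` with `0 < r ≤ 1`:
`d m = (1 - β) ∫₀¹ (m + s) ^ (-β) ds` and
`(m + t) ^ (-β) = Γ(β)⁻¹ ∫₀^∞ x ^ (β - 1) e^(-t x) (e^(-x)) ^ m dx`.
The quadratic form is linear in its coefficient sequence, so it suffices to treat a geometric
one; then, with `u n = ∑ₖ r ^ (n - k) v k`, the form telescopes to at least
`(1 + r) / 2 * u N ^ 2`.
-/

open Finset MeasureTheory Real Set

def averagedQuadForm (c : ℕ → ℝ) (N : ℕ) (v : ℕ → ℝ) : ℝ :=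
  (∑ n ∈ Icc 1 N, ∑ k ∈ Icc 1 n, c (n - k) * v k * v n)
    + ∑ n ∈ Icc 1 N, ∑ k ∈ Icc 1 (n - 1), c (n - 1 - k) * v k * v n

theorem averagedQuadForm_const_mul (a : ℝ) (c : ℕ → ℝ) (N : ℕ) (v : ℕ → ℝ) :
    averagedQuadForm (fun m => a * c m) N v = a * averagedQuadForm c N v := by
  simp only [averagedQuadForm, mul_add, mul_sum, mul_assoc]

theorem averagedQuadForm_integral_nonneg {α : Type*} [MeasurableSpace α] {μ : Measure α}
    {c : ℕ → α → ℝ} (hc : ∀ m, Integrable (c m) μ) (N : ℕ) (v : ℕ → ℝ)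
    (hpos : ∀ᵐ x ∂μ, 0 ≤ averagedQuadForm (fun m => c m x) N v) :
    0 ≤ averagedQuadForm (fun m => ∫ x, c m x ∂μ) N v := by
  have hterm (m : ℕ) (a b : ℝ) : Integrable (fun x => c m x * a * b) μ :=
    ((hc m).mul_const a).mul_const b
  have hsum (e : ℕ → ℕ → ℕ) (K : ℕ → Finset ℕ) :
      ∑ n ∈ Icc 1 N, ∑ k ∈ K n, (∫ x, c (e n k) x ∂μ) * v k * v n
        = ∫ x, ∑ n ∈ Icc 1 N, ∑ k ∈ K n, c (e n k) x * v k * v n ∂μ := by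
    rw [integral_finsetSum _ fun n _ => integrable_finsetSum _ fun k _ => hterm _ _ _]
    refine sum_congr rfl fun n _ => ?_
    rw [integral_finsetSum _ fun k _ => hterm _ _ _]
    simp only [integral_mul_const]
  have hint (e : ℕ → ℕ → ℕ) (K : ℕ → Finset ℕ) :
      Integrable (fun x => ∑ n ∈ Icc 1 N, ∑ k ∈ K n, c (e n k) x * v k * v n) μ :=
    integrable_finsetSum _ fun n _ => integrable_finsetSum _ fun k _ => hterm _ _ _
  have hform : averagedQuadForm (fun m => ∫ x, c m x ∂μ) N v
      = ∫ x, averagedQuadForm (fun m => c m x) N v ∂μ := by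
    rw [averagedQuadForm, hsum, hsum, ← integral_add (hint _ _) (hint _ _)]
    rfl
  exact hform ▸ integral_nonneg_of_ae hpos

def geomConv (r : ℝ) (v : ℕ → ℝ) (n : ℕ) : ℝ :=
  ∑ k ∈ Icc 1 n, r ^ (n - k) * v k

theorem geomConv_zero (r : ℝ) (v : ℕ → ℝ) : geomConv r v 0 = 0 := by
  simp [geomConv]

theorem geomConv_succ (r : ℝ) (v : ℕ → ℝ) (n : ℕ) :
    geomConv r v (n + 1) = r * geomConv r v n + v (n + 1) := by
  rw [geomConv, sum_Icc_succ_top (by omega), Nat.sub_self, pow_zero, one_mul, geomConv, mul_sum]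
  congr 1
  refine sum_congr rfl fun k hk => ?_
  rw [← mul_assoc, ← pow_succ', Nat.sub_add_comm (mem_Icc.mp hk).2]

theorem averagedQuadForm_pow_eq (r : ℝ) (N : ℕ) (v : ℕ → ℝ) :
    averagedQuadForm (r ^ ·) N v
      = ∑ n ∈ Icc 1 N, (geomConv r v n + geomConv r v (n - 1)) * v n := by
  simp only [averagedQuadForm, geomConv, add_mul, sum_mul, sum_add_distrib]

/-- Writing `v n = u n - r u (n - 1)` with `u = geomConv r v`, the `n`-th summand exceeds
`(1 + r) / 2 * (u n ^ 2 - u (n - 1) ^ 2)` by `(1 - r) / 2 * (u n + u (n - 1)) ^ 2`,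
so the sum telescopes. -/
theorem mul_sq_geomConv_le {r : ℝ} (hr : r ≤ 1) (v : ℕ → ℝ) (N : ℕ) :
    (1 + r) / 2 * geomConv r v N ^ 2
      ≤ ∑ n ∈ Icc 1 N, (geomConv r v n + geomConv r v (n - 1)) * v n := by
  induction N with
  | zero => simp [geomConv_zero]
  | succ N ih =>
    rw [sum_Icc_succ_top (by omega), Nat.add_sub_cancel]
    have hv : v (N + 1) = geomConv r v (N + 1) - r * geomConv r v N := by
      rw [geomConv_succ]; ring
    rw [hv]
    nlinarith [mul_nonneg (sub_nonneg.mpr hr) (sq_nonneg (geomConv r v (N + 1) + geomConv r v N))]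

theorem averagedQuadForm_pow_nonneg {r : ℝ} (hr₀ : -1 ≤ r) (hr₁ : r ≤ 1) (N : ℕ)
    (v : ℕ → ℝ) :
    0 ≤ averagedQuadForm (r ^ ·) N v := by
  rw [averagedQuadForm_pow_eq]
  exact le_trans (mul_nonneg (by linarith) (sq_nonneg _)) (mul_sq_geomConv_le hr₁ v N)

theorem averagedQuadForm_add_rpow_neg_nonneg {β t : ℝ} (hβ : 0 < β) (ht : 0 < t) (N : ℕ)
    (v : ℕ → ℝ) : 0 ≤ averagedQuadForm (fun m => ((m : ℝ) + t) ^ (-β)) N v := by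
  set c : ℕ → ℝ → ℝ := fun m x =>
    (Gamma β)⁻¹ * (x ^ (β - 1) * exp (-(t * x))) * exp (-x) ^ m
  have hc (m : ℕ) (x : ℝ) :
      c m x = (Gamma β)⁻¹ * (x ^ (β - 1) * exp (-(((m : ℝ) + t) * x))) := by
    simp only [c, ← exp_nat_mul, mul_assoc, ← exp_add]
    ring_nf
  have hmt (m : ℕ) : 0 < (m : ℝ) + t := by positivity
  have hrep (m : ℕ) : ((m : ℝ) + t) ^ (-β) = ∫ x in Ioi 0, c m x := by
    simp only [hc, integral_const_mul, integral_rpow_mul_exp_neg_mul_Ioi hβ (hmt m), one_div,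
      inv_rpow (hmt m).le, rpow_neg (hmt m).le]
    field_simp [(Gamma_pos_of_pos hβ).ne']
  have hint (m : ℕ) : IntegrableOn (c m) (Ioi 0) := by
    rw [show c m = _ from funext (hc m)]
    have h := integrableOn_rpow_mul_exp_neg_mul_rpow (s := β - 1) (by linarith) one_pos (hmt m)
    simp only [rpow_one, neg_mul] at h
    exact h.const_mul _
  rw [funext hrep]
  refine averagedQuadForm_integral_nonneg hint N v ?_
  filter_upwards [ae_restrict_mem measurableSet_Ioi] with x (hx : 0 < x)
  rw [averagedQuadForm_const_mul]
  have hcx : 0 ≤ (Gamma β)⁻¹ * (x ^ (β - 1) * exp (-(t * x))) := by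
    have := Gamma_pos_of_pos hβ
    positivity
  exact mul_nonneg hcx <| averagedQuadForm_pow_nonneg
    (by linarith [(exp_pos (-x)).le]) (exp_le_one_iff.mpr (by linarith)) N v

theorem rpow_add_one_sub_rpow_eq_integral {β : ℝ} (hβ : β < 1) (m : ℕ) :
    ((m : ℝ) + 1) ^ (1 - β) - (m : ℝ) ^ (1 - β)
      = ∫ s in Ioc 0 1, (1 - β) * ((m : ℝ) + s) ^ (-β) := by
  rw [← intervalIntegral.integral_of_le zero_le_one, intervalIntegral.integral_const_mul,
    intervalIntegral.integral_comp_add_left (fun x => x ^ (-β)), integral_rpow (by left; linarith)]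
  rw [add_zero, neg_add_eq_sub]
  field_simp [(sub_pos.mpr hβ).ne']

theorem integrableOn_add_rpow_neg {β : ℝ} (hβ : β < 1) (m : ℕ) :
    IntegrableOn (fun s => ((m : ℝ) + s) ^ (-β)) (Ioc 0 1) := by
  have h := (intervalIntegral.intervalIntegrable_rpow' (a := m) (b := m + 1)
    (by linarith : -1 < -β)).comp_add_left (m : ℝ)
  rwa [sub_self, add_sub_cancel_left,
    intervalIntegrable_iff_integrableOn_Ioc_of_le zero_le_one] at h

theorem L1_averaged_quadratic_form_nonneg_general
    (β : ℝ) (hβ0 : 0 < β) (hβ1 : β < 1)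
    (d : ℕ → ℝ) (hd : ∀ k, d k = ((k : ℝ) + 1) ^ (1 - β) - (k : ℝ) ^ (1 - β))
    (N : ℕ) (v : ℕ → ℝ) :
    (∑ n ∈ Finset.Icc 1 N, ∑ k ∈ Finset.Icc 1 n, d (n - k) * v k * v n)
      + ∑ n ∈ Finset.Icc 1 N, ∑ k ∈ Finset.Icc 1 (n - 1), d (n - 1 - k) * v k * v n
      ≥ 0 := by
  show 0 ≤ averagedQuadForm d N v
  rw [funext fun m => (hd m).trans (rpow_add_one_sub_rpow_eq_integral hβ1 m)]
  refine averagedQuadForm_integral_nonneg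
    (fun m => (integrableOn_add_rpow_neg hβ1 m).const_mul _) N v ?_
  filter_upwards [ae_restrict_mem measurableSet_Ioc] with s hs
  rw [averagedQuadForm_const_mul]
  exact mul_nonneg (by linarith) (averagedQuadForm_add_rpow_neg_nonneg hβ0 hs.1 N v)

/-- Lemma 2.6, inequality (17): nonnegativity of the averaged quadratic form
built from the L1 coefficients `d_k^{(β)}`. -/
theorem L1_averaged_quadratic_form_nonneg
    (β : ℝ) (hβ0 : 0 < β) (hβ1 : β < 1)
    (d : ℕ → ℝ) (hd : ∀ k, d k = ((k : ℝ) + 1) ^ (1 - β) - (k : ℝ) ^ (1 - β))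
    (N : ℕ) (hN : 1 ≤ N) (v : ℕ → ℝ) :
    (∑ n ∈ Finset.Icc 1 N, ∑ k ∈ Finset.Icc 1 n, d (n - k) * v k * v n)
      + ∑ n ∈ Finset.Icc 1 N, ∑ k ∈ Finset.Icc 1 (n - 1), d (n - 1 - k) * v k * v n
      ≥ 0 :=
  L1_averaged_quadratic_form_nonneg_general β hβ0 hβ1 d hd N v
end

section
/- Let 0 < β < 1, τ > 0, h > 0, and M ≥ 1, N ≥ 1 integers, and define d_k^{(β)} = (k+1)^{1−β} − k^{1−β} for integers k ≥ 0. Let U^0, U^1, …, U^N be grid functions in V_h (i.e., U^n_0 = U^n_M = 0 for each n). Then Σ_{n=1}^{N} [Σ_{k=1}^{n} d_{n−k}^{(β)} · (∇_t(δ_x² U^k), ∇_t U^n) + Σ_{k=1}^{n−1} d_{n−1−k}^{(β)} · (∇_t(δ_x² U^k), ∇_t U^n)] ≤ 0. -/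
/-!
Summation by parts in space turns each pairing `(∇_t δ_x² U^k, ∇_t U^n)` into
`-(1 / (h τ²)) Σ_i D^k_i D^n_i` with `D^n_i = ∇_x ∇_t U^n_i`, so for each spatial index `i` it
suffices that the quadratic form `Σ_n (Σ_{k ≤ n} a_{n-k} w_k w_n + Σ_{k < n} a_{n-1-k} w_k w_n)`
is nonnegative for the kernel `a = d^{(β)}`.

For a geometric kernel `a_j = ρ^j`, `0 ≤ ρ ≤ 1`, the partial convolutions
`S_n = Σ_{k ≤ n} ρ^{n-k} w_k` satisfy `S_{n+1} = ρ S_n + w_{n+1}`, and an induction shows that the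
form is at least `(1 + ρ) / 2 · S_N²`. The kernel `d^{(β)}` is a nonnegative mixture of geometric
kernels: with `γ = 1 - β` and `φ_t(x) = (1 - e^{-tx}) x^{-γ-1}`, the substitution `x ↦ t x` gives
`∫_0^∞ φ_t = t^γ ∫_0^∞ φ_1`, and `φ_{j+1} - φ_j = φ_1(x) e^{-jx}`, hence
`d_j ∫_0^∞ φ_1 = ∫_0^∞ φ_1(x) (e^{-x})^j dx` with `∫_0^∞ φ_1 > 0`.
-/

open Finset MeasureTheory Real

def averagedForm (a : ℕ → ℝ) (B : ℕ → ℕ → ℝ) (N : ℕ) : ℝ :=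
  ∑ n ∈ Icc 1 N,
    ((∑ k ∈ Icc 1 n, a (n - k) * B k n) + ∑ k ∈ Icc 1 (n - 1), a (n - 1 - k) * B k n)

section averagedForm

variable (a : ℕ → ℝ) (B : ℕ → ℕ → ℝ) (N : ℕ)

theorem averagedForm_congr {B' : ℕ → ℕ → ℝ} (h : ∀ n ∈ Icc 1 N, ∀ k, B k n = B' k n) :
    averagedForm a B N = averagedForm a B' N :=
  sum_congr rfl fun n hn => by simp only [h n hn]

theorem averagedForm_const_mul (c : ℝ) :
    averagedForm a (fun k n => c * B k n) N = c * averagedForm a B N := by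
  simp only [averagedForm, mul_sum, mul_add, mul_left_comm c]

theorem averagedForm_sum {ι : Type*} (s : Finset ι) (F : ι → ℕ → ℕ → ℝ) :
    averagedForm a (fun k n => ∑ i ∈ s, F i k n) N = ∑ i ∈ s, averagedForm a (F i) N := by
  simp only [averagedForm, mul_sum]
  rw [sum_comm]
  refine sum_congr rfl fun n _ => ?_
  rw [sum_add_distrib, sum_comm, sum_comm (s := Icc 1 (n - 1))]

theorem averagedForm_kernel_const_mul (c : ℝ) :
    averagedForm (fun j => c * a j) B N = c * averagedForm a B N := by
  simp only [averagedForm, mul_sum, mul_add, mul_assoc]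

theorem integral_averagedForm {α : Type*} [MeasurableSpace α] {μ : Measure α} {G : ℕ → α → ℝ}
    (hG : ∀ j, Integrable (G j) μ) :
    ∫ x, averagedForm (fun j => G j x) B N ∂μ = averagedForm (fun j => ∫ x, G j x ∂μ) B N := by
  have hrow : ∀ m p n, Integrable (fun x => ∑ k ∈ Icc 1 m, G (p - k) x * B k n) μ :=
    fun m p n => integrable_finsetSum _ fun k _ => (hG _).mul_const _
  have hterm : ∀ n, Integrable (fun x => (∑ k ∈ Icc 1 n, G (n - k) x * B k n)
      + ∑ k ∈ Icc 1 (n - 1), G (n - 1 - k) x * B k n) μ :=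
    fun n => (hrow _ _ _).add (hrow _ _ _)
  simp only [averagedForm]
  rw [integral_finsetSum _ fun n _ => hterm n]
  refine sum_congr rfl fun n _ => ?_
  rw [integral_add (hrow _ _ _) (hrow _ _ _), integral_finsetSum _ fun k _ => (hG _).mul_const _,
    integral_finsetSum _ fun k _ => (hG _).mul_const _]
  simp only [integral_mul_const]

end averagedForm

theorem averagedForm_geom_nonneg {ρ : ℝ} (hρ0 : 0 ≤ ρ) (hρ1 : ρ ≤ 1) (w : ℕ → ℝ) (N : ℕ) :
    0 ≤ averagedForm (ρ ^ ·) (fun k n => w k * w n) N := by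
  set S : ℕ → ℝ := fun n => ∑ k ∈ Icc 1 n, ρ ^ (n - k) * w k with hS
  have hS_succ : ∀ n, S (n + 1) = ρ * S n + w (n + 1) := by
    intro n
    simp only [hS]
    rw [sum_Icc_succ_top (by omega : 1 ≤ n + 1), Nat.sub_self, pow_zero, one_mul, mul_sum]
    refine congrArg (· + _) (sum_congr rfl fun k hk => ?_)
    rw [show n + 1 - k = n - k + 1 by have := (mem_Icc.1 hk).2; omega, pow_succ]
    ring
  have hrow : ∀ n m, ∑ k ∈ Icc 1 n, ρ ^ (n - k) * (w k * w m) = S n * w m := fun n m => by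
    rw [hS, sum_mul]
    exact sum_congr rfl fun k _ => by ring
  -- the invariant behind the induction; the increment is `(1 - ρ) / 2 * (S (n + 1) + S n) ^ 2`
  have key : ∀ n, (1 + ρ) / 2 * S n ^ 2 ≤ averagedForm (ρ ^ ·) (fun k n => w k * w n) n := by
    intro n
    induction n with
    | zero => simp [hS, averagedForm]
    | succ n ih =>
      rw [averagedForm, sum_Icc_succ_top (by omega), ← averagedForm, Nat.add_sub_cancel,
        hrow, hrow, show w (n + 1) = S (n + 1) - ρ * S n by rw [hS_succ]; ring]
      nlinarith [mul_nonneg (sub_nonneg.2 hρ1) (sq_nonneg (S (n + 1) + S n))]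
  exact le_trans (by positivity) (key N)

theorem averagedForm_nonneg_of_geom_mixture {α : Type*} [MeasurableSpace α] {μ : Measure α}
    {c ρ : α → ℝ} (hc : ∀ᵐ x ∂μ, 0 ≤ c x) (hρ : ∀ᵐ x ∂μ, 0 ≤ ρ x ∧ ρ x ≤ 1)
    (hint : ∀ j : ℕ, Integrable (fun x => c x * ρ x ^ j) μ) (w : ℕ → ℝ) (N : ℕ) :
    0 ≤ averagedForm (fun j => ∫ x, c x * ρ x ^ j ∂μ) (fun k n => w k * w n) N := by
  rw [← integral_averagedForm _ _ hint]
  refine integral_nonneg_of_ae ?_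
  filter_upwards [hc, hρ] with x hcx hρx
  rw [averagedForm_kernel_const_mul]
  exact mul_nonneg hcx (averagedForm_geom_nonneg hρx.1 hρx.2 w N)

noncomputable def bernsteinIntegrand (γ t x : ℝ) : ℝ := (1 - exp (-(t * x))) * x ^ (-γ - 1)

section bernsteinIntegrand

variable {γ t : ℝ}

theorem bernsteinIntegrand_nonneg (γ : ℝ) {x : ℝ} (ht : 0 ≤ t) (hx : 0 ≤ x) :
    0 ≤ bernsteinIntegrand γ t x :=
  mul_nonneg (sub_nonneg.2 (exp_le_one_iff.2 (neg_nonpos.2 (mul_nonneg ht hx))))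
    (rpow_nonneg hx _)

theorem integrableOn_bernsteinIntegrand (hγ0 : 0 < γ) (hγ1 : γ < 1) (ht : 0 ≤ t) :
    IntegrableOn (bernsteinIntegrand γ t) (Set.Ioi 0) := by
  have hmeas : ∀ s ⊆ Set.Ioi (0 : ℝ), MeasurableSet s →
      AEStronglyMeasurable (bernsteinIntegrand γ t) (volume.restrict s) := by
    refine fun s hs hsm => (ContinuousOn.mono ?_ hs).aestronglyMeasurable hsm
    exact (by fun_prop : Continuous fun x => 1 - exp (-(t * x))).continuousOn.mul
      fun x hx => (continuousAt_rpow_const _ _ (Or.inl (ne_of_gt hx))).continuousWithinAt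
  rw [← Set.Ioc_union_Ioi_eq_Ioi zero_le_one]
  refine IntegrableOn.union ?_ ?_
  · have hbound : IntegrableOn (fun x : ℝ => t * x ^ (-γ)) (Set.Ioc 0 1) := by
      refine Integrable.const_mul ?_ _
      exact (intervalIntegrable_iff_integrableOn_Ioc_of_le zero_le_one).1
        (intervalIntegral.intervalIntegrable_rpow' (by linarith))
    refine hbound.mono' (hmeas _ (fun x hx => hx.1) measurableSet_Ioc) ?_
    refine (ae_restrict_iff' measurableSet_Ioc).2 (Filter.Eventually.of_forall fun x hx => ?_)
    rw [norm_of_nonneg (bernsteinIntegrand_nonneg γ ht hx.1.le), bernsteinIntegrand,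
      rpow_sub_one hx.1.ne']
    have hexp : 1 - exp (-(t * x)) ≤ t * x := by linarith [add_one_le_exp (-(t * x))]
    calc (1 - exp (-(t * x))) * (x ^ (-γ) / x) ≤ t * x * (x ^ (-γ) / x) :=
          mul_le_mul_of_nonneg_right hexp (by positivity [hx.1])
      _ = t * x ^ (-γ) := by field_simp [hx.1.ne']
  · have hbound : IntegrableOn (fun x : ℝ => x ^ (-γ - 1)) (Set.Ioi 1) :=
      integrableOn_Ioi_rpow_of_lt (by linarith) one_pos
    refine hbound.mono'
      (hmeas _ (fun x hx => Set.mem_Ioi.2 (lt_trans one_pos hx)) measurableSet_Ioi) ?_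
    refine (ae_restrict_iff' measurableSet_Ioi).2 (Filter.Eventually.of_forall fun x hx => ?_)
    have hx0 : (0 : ℝ) < x := lt_trans one_pos hx
    rw [norm_of_nonneg (bernsteinIntegrand_nonneg γ ht hx0.le), bernsteinIntegrand]
    exact mul_le_of_le_one_left (by positivity) (by linarith [exp_pos (-(t * x))])

theorem integral_bernsteinIntegrand (hγ : γ ≠ 0) (ht : 0 ≤ t) :
    ∫ x in Set.Ioi 0, bernsteinIntegrand γ t x
      = t ^ γ * ∫ x in Set.Ioi 0, bernsteinIntegrand γ 1 x := by
  rcases ht.eq_or_lt with rfl | ht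
  · simp [bernsteinIntegrand, zero_rpow hγ]
  have hscale : ∀ x ∈ Set.Ioi (0 : ℝ),
      bernsteinIntegrand γ 1 (t * x) = t ^ (-γ - 1) * bernsteinIntegrand γ t x := by
    intro x hx
    simp only [bernsteinIntegrand, one_mul, mul_rpow ht.le (le_of_lt hx)]
    ring
  have h := integral_comp_mul_left_Ioi (bernsteinIntegrand γ 1) 0 ht
  rw [setIntegral_congr_fun measurableSet_Ioi hscale, integral_const_mul, mul_zero,
    smul_eq_mul] at h
  have hpow : t⁻¹ = t ^ γ * t ^ (-γ - 1) := by
    rw [← rpow_add ht, ← rpow_neg_one]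
    ring_nf
  rw [hpow] at h
  exact mul_left_cancel₀ (rpow_pos_of_pos ht _).ne' (h.trans (by ring))

theorem integral_bernsteinIntegrand_one_pos (hγ0 : 0 < γ) (hγ1 : γ < 1) :
    0 < ∫ x in Set.Ioi 0, bernsteinIntegrand γ 1 x := by
  have hpos : ∀ x ∈ Set.Ioi (0 : ℝ), 0 < bernsteinIntegrand γ 1 x := fun x hx =>
    mul_pos (sub_pos.2 (exp_lt_one_iff.2 (by simpa using hx))) (rpow_pos_of_pos hx _)
  rw [setIntegral_pos_iff_support_of_nonneg_ae
    ((ae_restrict_iff' measurableSet_Ioi).2 (Filter.Eventually.of_forall fun x hx =>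
      (hpos x hx).le))
    (integrableOn_bernsteinIntegrand hγ0 hγ1 zero_le_one)]
  exact lt_of_lt_of_le (by simp) (measure_mono fun x hx => ⟨(hpos x hx).ne', hx⟩)

theorem bernsteinIntegrand_natCast_succ_sub (γ : ℝ) (j : ℕ) (x : ℝ) :
    bernsteinIntegrand γ (j + 1) x - bernsteinIntegrand γ j x
      = bernsteinIntegrand γ 1 x * exp (-x) ^ j := by
  rw [← exp_nat_mul]
  simp only [bernsteinIntegrand, add_mul, one_mul, neg_add, exp_add, mul_neg]
  ring

end bernsteinIntegrand

theorem rpow_natCast_succ_sub_rpow_mul_integral {γ : ℝ} (hγ0 : 0 < γ) (hγ1 : γ < 1) (j : ℕ) :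
    (((j : ℝ) + 1) ^ γ - (j : ℝ) ^ γ) * ∫ x in Set.Ioi 0, bernsteinIntegrand γ 1 x
      = ∫ x in Set.Ioi 0, bernsteinIntegrand γ 1 x * exp (-x) ^ j := by
  simp only [← bernsteinIntegrand_natCast_succ_sub]
  rw [integral_sub (integrableOn_bernsteinIntegrand hγ0 hγ1 (by positivity))
      (integrableOn_bernsteinIntegrand hγ0 hγ1 (by positivity)),
    integral_bernsteinIntegrand (t := j + 1) hγ0.ne' (by positivity),
    integral_bernsteinIntegrand (t := j) hγ0.ne' (by positivity)]
  ring

theorem averagedForm_rpow_natCast_succ_sub_nonneg {γ : ℝ} (hγ0 : 0 < γ) (hγ1 : γ < 1)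
    (w : ℕ → ℝ) (N : ℕ) :
    0 ≤ averagedForm (fun j => ((j : ℝ) + 1) ^ γ - (j : ℝ) ^ γ) (fun k n => w k * w n) N := by
  set I := ∫ x in Set.Ioi 0, bernsteinIntegrand γ 1 x
  have hI : 0 < I := integral_bernsteinIntegrand_one_pos hγ0 hγ1
  set c : ℝ → ℝ := fun x => I⁻¹ * bernsteinIntegrand γ 1 x
  have hkernel : (fun j : ℕ => ((j : ℝ) + 1) ^ γ - (j : ℝ) ^ γ)
      = fun j => ∫ x in Set.Ioi 0, c x * exp (-x) ^ j := by
    funext j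
    rw [← mul_div_cancel_right₀ (((j : ℝ) + 1) ^ γ - (j : ℝ) ^ γ) hI.ne',
      rpow_natCast_succ_sub_rpow_mul_integral hγ0 hγ1, div_eq_inv_mul, ← integral_const_mul]
    simp only [c, mul_assoc]
  rw [hkernel]
  refine averagedForm_nonneg_of_geom_mixture ?_ ?_ (fun j => ?_) w N
  · exact (ae_restrict_iff' measurableSet_Ioi).2 (Filter.Eventually.of_forall fun x hx =>
      mul_nonneg (inv_nonneg.2 hI.le) (bernsteinIntegrand_nonneg γ zero_le_one (le_of_lt hx)))
  · exact (ae_restrict_iff' measurableSet_Ioi).2 (Filter.Eventually.of_forall fun x hx =>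
      ⟨(exp_pos _).le, exp_le_one_iff.2 (neg_nonpos.2 (le_of_lt hx))⟩)
  · simp only [c, mul_assoc, ← bernsteinIntegrand_natCast_succ_sub]
    exact ((integrableOn_bernsteinIntegrand hγ0 hγ1 (by positivity)).sub
      (integrableOn_bernsteinIntegrand hγ0 hγ1 (by positivity))).const_mul _

theorem sum_secondDiff_mul_add_sum_diff_mul_diff (v u : ℕ → ℝ) (M : ℕ) :
    ∑ i ∈ Icc 1 M, (v (i - 1) - 2 * v i + v (i + 1)) * u i
        + ∑ i ∈ Icc 1 (M + 1), (v i - v (i - 1)) * (u i - u (i - 1))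
      = (v (M + 1) - v M) * u (M + 1) - (v 1 - v 0) * u 0 := by
  induction M with
  | zero =>
    simp only [zero_add, Icc_self, sum_singleton, Nat.sub_self, Icc_eq_empty_of_lt one_pos,
      sum_empty]
    ring
  | succ M ih =>
    rw [sum_Icc_succ_top (by omega), sum_Icc_succ_top (by omega : 1 ≤ M + 1 + 1),
      Nat.add_sub_cancel, Nat.add_sub_cancel]
    linear_combination ih

theorem sum_secondDiff_mul_eq_neg_sum_diff_mul_diff (v u : ℕ → ℝ) {M : ℕ} (h0 : u 0 = 0)
    (hM : u M = 0) :
    ∑ i ∈ Icc 1 (M - 1), (v (i - 1) - 2 * v i + v (i + 1)) * u i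
      = -∑ i ∈ Icc 1 M, (v i - v (i - 1)) * (u i - u (i - 1)) := by
  cases M with
  | zero => simp
  | succ M =>
    rw [Nat.add_sub_cancel]
    linear_combination sum_secondDiff_mul_add_sum_diff_mul_diff v u M
      + (v (M + 1) - v M) * hM - (v 1 - v 0) * h0

theorem mul_sum_timeDiff_secondDiff_mul_timeDiff (h τ : ℝ) (p q u v : ℕ → ℝ) {M : ℕ}
    (hu : u 0 = 0 ∧ u M = 0) (hv : v 0 = 0 ∧ v M = 0) :
    h * ∑ i ∈ Icc 1 (M - 1),
        (((p (i - 1) - 2 * p i + p (i + 1)) / h ^ 2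
          - (q (i - 1) - 2 * q i + q (i + 1)) / h ^ 2) / τ) * ((u i - v i) / τ)
      = -(h / (h ^ 2 * τ ^ 2)) * ∑ i ∈ Icc 1 M,
          (p i - q i - (p (i - 1) - q (i - 1))) * (u i - v i - (u (i - 1) - v (i - 1))) := by
  have hsbp := sum_secondDiff_mul_eq_neg_sum_diff_mul_diff (fun i => p i - q i)
    (fun i => u i - v i) (M := M) (by simp [hu.1, hv.1]) (by simp [hu.2, hv.2])
  rw [neg_mul, ← mul_neg, ← hsbp, mul_sum, mul_sum]
  exact sum_congr rfl fun i _ => by ring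

theorem weighted_averaged_double_sum_nonpos_general
    (β τ h : ℝ) (hβ0 : 0 < β) (hβ1 : β < 1) (hh : 0 < h)
    (M N : ℕ)
    (d : ℕ → ℝ) (hd : ∀ k, d k = ((k : ℝ) + 1) ^ (1 - β) - (k : ℝ) ^ (1 - β))
    (U : ℕ → ℕ → ℝ) (hU : ∀ n ≤ N, U n 0 = 0 ∧ U n M = 0) :
    ∑ n ∈ Finset.Icc 1 N,
        ((∑ k ∈ Finset.Icc 1 n, d (n - k) *
            (h * ∑ i ∈ Finset.Icc 1 (M - 1),
              (((U k (i - 1) - 2 * U k i + U k (i + 1)) / h ^ 2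
                - (U (k - 1) (i - 1) - 2 * U (k - 1) i + U (k - 1) (i + 1)) / h ^ 2) / τ)
              * ((U n i - U (n - 1) i) / τ)))
          + ∑ k ∈ Finset.Icc 1 (n - 1), d (n - 1 - k) *
              (h * ∑ i ∈ Finset.Icc 1 (M - 1),
                (((U k (i - 1) - 2 * U k i + U k (i + 1)) / h ^ 2
                  - (U (k - 1) (i - 1) - 2 * U (k - 1) i + U (k - 1) (i + 1)) / h ^ 2) / τ)
                * ((U n i - U (n - 1) i) / τ)))
      ≤ 0 := by
  show averagedForm d (fun k n => _) N ≤ 0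
  obtain rfl : d = _ := funext hd
  rw [averagedForm_congr _ _ _ fun n hn k => mul_sum_timeDiff_secondDiff_mul_timeDiff h τ
      (U k) (U (k - 1)) (U n) (U (n - 1)) (hU n (mem_Icc.1 hn).2) (hU (n - 1) (by
        have := (mem_Icc.1 hn).2; omega)),
    averagedForm_const_mul, averagedForm_sum, neg_mul, neg_nonpos]
  exact mul_nonneg (by positivity) (sum_nonneg fun i _ =>
    averagedForm_rpow_natCast_succ_sub_nonneg (by linarith) (by linarith) _ N)

/-- The key nonpositivity estimate (39): the averaged double sum of
`d_{n−k}^{(β)} (∇_t(δ_x² U^k), ∇_t U^n)` terms is nonpositive for grid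
functions vanishing at the endpoints. -/
theorem weighted_averaged_double_sum_nonpos
    (β τ h : ℝ) (hβ0 : 0 < β) (hβ1 : β < 1) (hτ : 0 < τ) (hh : 0 < h)
    (M N : ℕ) (hM : 1 ≤ M) (hN : 1 ≤ N)
    (d : ℕ → ℝ) (hd : ∀ k, d k = ((k : ℝ) + 1) ^ (1 - β) - (k : ℝ) ^ (1 - β))
    (U : ℕ → ℕ → ℝ) (hU : ∀ n ≤ N, U n 0 = 0 ∧ U n M = 0) :
    ∑ n ∈ Finset.Icc 1 N,
        ((∑ k ∈ Finset.Icc 1 n, d (n - k) *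
            (h * ∑ i ∈ Finset.Icc 1 (M - 1),
              (((U k (i - 1) - 2 * U k i + U k (i + 1)) / h ^ 2
                - (U (k - 1) (i - 1) - 2 * U (k - 1) i + U (k - 1) (i + 1)) / h ^ 2) / τ)
              * ((U n i - U (n - 1) i) / τ)))
          + ∑ k ∈ Finset.Icc 1 (n - 1), d (n - 1 - k) *
              (h * ∑ i ∈ Finset.Icc 1 (M - 1),
                (((U k (i - 1) - 2 * U k i + U k (i + 1)) / h ^ 2
                  - (U (k - 1) (i - 1) - 2 * U (k - 1) i + U (k - 1) (i + 1)) / h ^ 2) / τ)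
                * ((U n i - U (n - 1) i) / τ)))
      ≤ 0 :=
  weighted_averaged_double_sum_nonpos_general β τ h hβ0 hβ1 hh M N d hd U hU
end
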